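/- Let V and W be finite-dimensional real inner product spaces and let L : V → W be a linear map. Let E and E₁, E₂, E₃, … be linear subspaces of W such that range(L) + E = W and range(L) + Eᵢ = W for all i. If ‖P_{Eᵢ} − P_E‖_op → 0 as i → ∞, then ‖P_{L⁻¹(Eᵢ)} − P_{L⁻¹(E)}‖_op → 0, where L⁻¹(E) ⊆ V denotes the preimage subspace of E under L. -/

import Mathlib

open Filter

/-- The orthogonal projection of a finite-dimensional real inner product space onto a
subspace, regarded as a continuous linear endomorphism. -/
noncomputable def projOp {V : Type*} [NormedAddCommGroup V] [InnerProductSpace ℝ V]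
    [FiniteDimensional ℝ V] (E : Submodule ℝ V) : V →L[ℝ] V :=
  E.subtypeL.comp (E.orthogonalProjectionOnto)

section Aux

variable {V : Type*} [NormedAddCommGroup V] [InnerProductSpace ℝ V] [FiniteDimensional ℝ V]

lemma projOp_apply_mem (E : Submodule ℝ V) (x : V) : projOp E x ∈ E :=
  (E.orthogonalProjectionOnto x).2

lemma projOp_eq_self {E : Submodule ℝ V} {x : V} (h : x ∈ E) : projOp E x = x :=
  Submodule.starProjection_eq_self_iff.mpr h

lemma mem_of_projOp_eq {E : Submodule ℝ V} {x : V} (h : projOp E x = x) : x ∈ E :=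
  h ▸ projOp_apply_mem E x

lemma projOp_idem (E : Submodule ℝ V) : IsIdempotentElem (projOp E) := by
  ext x
  exact projOp_eq_self (projOp_apply_mem E x)

lemma projOp_selfAdjoint (E : Submodule ℝ V) : IsSelfAdjoint (projOp E) :=
  isSelfAdjoint_starProjection E

lemma norm_projOp_le (E : Submodule ℝ V) : ‖projOp E‖ ≤ 1 := by
  refine ContinuousLinearMap.opNorm_le_bound _ zero_le_one (fun x => ?_)
  rw [one_mul]
  calc ‖projOp E x‖ = ‖E.orthogonalProjectionOnto x‖ := rfl
    _ ≤ ‖E.orthogonalProjectionOnto‖ * ‖x‖ := (E.orthogonalProjectionOnto).le_opNorm x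
    _ ≤ 1 * ‖x‖ := by
        exact mul_le_mul_of_nonneg_right (Submodule.orthogonalProjectionOnto_norm_le E) (norm_nonneg x)
    _ = ‖x‖ := one_mul _

lemma range_projOp (E : Submodule ℝ V) : LinearMap.range (projOp E : V →ₗ[ℝ] V) = E := by
  apply le_antisymm
  · rintro _ ⟨x, rfl⟩; exact projOp_apply_mem E x
  · intro x hx; exact ⟨x, projOp_eq_self hx⟩

lemma finrank_range_le_of_idem {P Q : V →L[ℝ] V} (hP : IsIdempotentElem P)
    (h : ‖P - Q‖ < 1) :
    Module.finrank ℝ (LinearMap.range (P : V →ₗ[ℝ] V)) ≤ Module.finrank ℝ (LinearMap.range (Q : V →ₗ[ℝ] V)) := by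
  have hmem : ∀ x ∈ LinearMap.range (P : V →ₗ[ℝ] V), Q x ∈ LinearMap.range (Q : V →ₗ[ℝ] V) := fun x _ =>
    LinearMap.mem_range_self _ x
  refine LinearMap.finrank_le_finrank_of_injective
    (f := (Q : V →ₗ[ℝ] V).restrict hmem) ?_
  rw [← LinearMap.ker_eq_bot, Submodule.eq_bot_iff]
  rintro ⟨x, hx⟩ hker
  have hQx : Q x = 0 := by
    have := congrArg (Subtype.val) hker
    simpa [LinearMap.restrict_apply] using this
  obtain ⟨y, rfl⟩ := hx
  have hPx : P (P y) = P y := by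
    have := congrFun (congrArg DFunLike.coe hP) y
    simpa [ContinuousLinearMap.mul_apply] using this
  have hxn : ‖P y‖ ≤ ‖P - Q‖ * ‖P y‖ := by
    calc ‖P y‖ = ‖(P - Q) (P y)‖ := by
          have hQx' : Q (P y) = 0 := hQx
          simp [ContinuousLinearMap.sub_apply, hPx, hQx']
      _ ≤ ‖P - Q‖ * ‖P y‖ := (P - Q).le_opNorm _
  have : P y = 0 := by
    by_contra hne
    have hpos : 0 < ‖P y‖ := norm_pos_iff.mpr hne
    nlinarith [hxn, hpos, h]
  simp [this]

lemma finrank_range_eq_of_idem {P Q : V →L[ℝ] V} (hP : IsIdempotentElem P)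
    (hQ : IsIdempotentElem Q) (h : ‖P - Q‖ < 1) :
    Module.finrank ℝ (LinearMap.range (P : V →ₗ[ℝ] V)) = Module.finrank ℝ (LinearMap.range (Q : V →ₗ[ℝ] V)) := by
  have h' : ‖Q - P‖ < 1 := by rwa [norm_sub_rev]
  exact le_antisymm (finrank_range_le_of_idem hP h) (finrank_range_le_of_idem hQ h')

lemma tendsto_apply_clm {X Y : Type*} [NormedAddCommGroup X] [NormedSpace ℝ X]
    [NormedAddCommGroup Y] [NormedSpace ℝ Y]
    {f : ℕ → (X →L[ℝ] Y)} {g : ℕ → X} {a : X →L[ℝ] Y} {b : X}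
    (hf : Tendsto f atTop (nhds a)) (hg : Tendsto g atTop (nhds b)) :
    Tendsto (fun n => f n (g n)) atTop (nhds (a b)) :=
  (isBoundedBilinearMap_apply.continuous.tendsto (a, b)).comp (hf.prodMk_nhds hg)

lemma finrank_comap_add {W : Type*} [NormedAddCommGroup W] [InnerProductSpace ℝ W]
    [FiniteDimensional ℝ W] (L : V →ₗ[ℝ] W) (F : Submodule ℝ W)
    (h : LinearMap.range L ⊔ F = ⊤) :
    Module.finrank ℝ (Submodule.comap L F) + Module.finrank ℝ W
      = Module.finrank ℝ V + Module.finrank ℝ F := by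
  set K := Submodule.comap L F with hK
  have h1 := Submodule.finrank_sup_add_finrank_inf_eq (LinearMap.range L) F
  rw [h, finrank_top] at h1
  have h2 := LinearMap.finrank_range_add_finrank_ker L
  have h3 := LinearMap.finrank_range_add_finrank_ker (L.domRestrict K)
  rw [LinearMap.range_domRestrict] at h3
  have hmap : Submodule.map L K = LinearMap.range L ⊓ F := Submodule.map_comap_eq L F
  rw [hmap] at h3
  have hkerle : LinearMap.ker L ≤ K := by
    intro x hx
    simp only [hK, Submodule.mem_comap, LinearMap.mem_ker.mp hx]
    exact F.zero_mem
  have h4 : Module.finrank ℝ (LinearMap.ker (L.domRestrict K))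
      = Module.finrank ℝ (LinearMap.ker L) := by
    rw [LinearMap.ker_domRestrict]
    exact LinearEquiv.finrank_eq (Submodule.comapSubtypeEquivOfLe hkerle)
  omega

end Aux

/-- Let `L : V → W` be a linear map between finite-dimensional real
inner product spaces, and let `E`, `Eᵢ` be subspaces of `W` transverse to the range
of `L`. If the orthogonal projections onto the `Eᵢ` converge in operator norm to the
orthogonal projection onto `E`, then the orthogonal projections onto the preimages
`L⁻¹(Eᵢ)` converge in operator norm to the orthogonal projection onto `L⁻¹(E)`. -/
theorem stmt9 {V W : Type*} [NormedAddCommGroup V] [InnerProductSpace ℝ V]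
    [FiniteDimensional ℝ V] [NormedAddCommGroup W] [InnerProductSpace ℝ W]
    [FiniteDimensional ℝ W] (L : V →ₗ[ℝ] W)
    (E : Submodule ℝ W) (F : ℕ → Submodule ℝ W)
    (hE : LinearMap.range L ⊔ E = ⊤) (hF : ∀ i, LinearMap.range L ⊔ F i = ⊤)
    (hconv : Tendsto (fun i => ‖projOp (F i) - projOp E‖) atTop (nhds 0)) :
    Tendsto (fun i => ‖projOp (Submodule.comap L (F i)) - projOp (Submodule.comap L E)‖)
      atTop (nhds 0) := by
  have hconv' : Tendsto (fun i => projOp (F i)) atTop (nhds (projOp E)) :=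
    tendsto_iff_norm_sub_tendsto_zero.mpr hconv
  rw [← tendsto_iff_norm_sub_tendsto_zero]
  set G := Submodule.comap L E with hG
  apply tendsto_of_subseq_tendsto
  intro ns hns
  have hcomp : IsCompact (Metric.closedBall (0 : V →L[ℝ] V) 1) :=
    isCompact_closedBall _ _
  obtain ⟨Q, -, φ, hφ, hQtend⟩ := hcomp.tendsto_subseq
    (x := fun n => projOp (Submodule.comap L (F (ns n))))
    (fun n => by
      simp only [Metric.mem_closedBall, dist_zero_right]
      exact norm_projOp_le _)
  refine ⟨φ, ?_⟩
  set g : ℕ → ℕ := ns ∘ φ with hgdef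
  have hg : Tendsto g atTop atTop := hns.comp hφ.tendsto_atTop
  set P : ℕ → (V →L[ℝ] V) := fun n => projOp (Submodule.comap L (F (g n))) with hPdef
  have hP : Tendsto P atTop (nhds Q) := hQtend
  set PF : ℕ → (W →L[ℝ] W) := fun n => projOp (F (g n)) with hPFdef
  have hPF : Tendsto PF atTop (nhds (projOp E)) := hconv'.comp hg
  -- Q is idempotent
  have hQidem : IsIdempotentElem Q := by
    have h1 : Tendsto (fun n => P n * P n) atTop (nhds (Q * Q)) := hP.mul hP
    have h2 : (fun n => P n * P n) = P := by
      funext n; exact projOp_idem _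
    rw [h2] at h1
    exact (tendsto_nhds_unique h1 hP)
  -- Q is self-adjoint
  have hQsa : IsSelfAdjoint Q := by
    have hc : Continuous (fun T : V →L[ℝ] V => ContinuousLinearMap.adjoint T) :=
      (ContinuousLinearMap.adjoint (E := V) (F := V)).continuous
    have h1 : Tendsto (fun n => ContinuousLinearMap.adjoint (P n)) atTop
        (nhds (ContinuousLinearMap.adjoint Q)) := (hc.tendsto Q).comp hP
    have h2 : (fun n => ContinuousLinearMap.adjoint (P n)) = P := by
      funext n; exact (projOp_selfAdjoint _).adjoint_eq
    rw [h2] at h1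
    exact (tendsto_nhds_unique h1 hP)
  -- range of Q is contained in G
  have hrange : LinearMap.range (Q : V →ₗ[ℝ] V) ≤ G := by
    rintro _ ⟨x, rfl⟩
    have hL : Continuous L := L.continuous_of_finiteDimensional
    have h1 : ∀ n, PF n (L (P n x)) = L (P n x) := fun n =>
      projOp_eq_self (Submodule.mem_comap.mp
        (projOp_apply_mem (Submodule.comap L (F (g n))) x))
    have h2 : Tendsto (fun n => P n x) atTop (nhds (Q x)) :=
      tendsto_apply_clm hP tendsto_const_nhds
    have h3 : Tendsto (fun n => L (P n x)) atTop (nhds (L (Q x))) :=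
      (hL.tendsto _).comp h2
    have h4 : Tendsto (fun n => PF n (L (P n x))) atTop
        (nhds (projOp E (L (Q x)))) := tendsto_apply_clm hPF h3
    have h5 : projOp E (L (Q x)) = L (Q x) :=
      tendsto_nhds_unique h4 (by simpa only [h1] using h3)
    exact Submodule.mem_comap.mpr (mem_of_projOp_eq h5)
  -- finrank of range Q equals finrank of G
  have hfr : Module.finrank ℝ (LinearMap.range (Q : V →ₗ[ℝ] V)) = Module.finrank ℝ G := by
    have hPn : Tendsto (fun n => ‖P n - Q‖) atTop (nhds 0) :=
      tendsto_iff_norm_sub_tendsto_zero.mp hP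
    have hPFn : Tendsto (fun n => ‖PF n - projOp E‖) atTop (nhds 0) :=
      tendsto_iff_norm_sub_tendsto_zero.mp hPF
    have hev1 : ∀ᶠ n in atTop, ‖P n - Q‖ < 1 :=
      hPn.eventually (eventually_lt_nhds zero_lt_one)
    have hev2 : ∀ᶠ n in atTop, ‖PF n - projOp E‖ < 1 :=
      hPFn.eventually (eventually_lt_nhds zero_lt_one)
    obtain ⟨n, hn1, hn2⟩ := (hev1.and hev2).exists
    have e1 : Module.finrank ℝ (LinearMap.range (P n : V →ₗ[ℝ] V))
        = Module.finrank ℝ (LinearMap.range (Q : V →ₗ[ℝ] V)) :=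
      finrank_range_eq_of_idem (projOp_idem _) hQidem hn1
    have e2 : Module.finrank ℝ (LinearMap.range (PF n : W →ₗ[ℝ] W))
        = Module.finrank ℝ (LinearMap.range (projOp E : W →ₗ[ℝ] W)) :=
      finrank_range_eq_of_idem (projOp_idem _) (projOp_idem _) hn2
    rw [range_projOp, range_projOp] at e2
    rw [range_projOp] at e1
    have c1 := finrank_comap_add L (F (g n)) (hF (g n))
    have c2 := finrank_comap_add L E hE
    rw [e2] at c1
    rw [← hG] at c2
    omega
  have hEQ : LinearMap.range (Q : V →ₗ[ℝ] V) = G := Submodule.eq_of_le_of_finrank_eq hrange hfr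
  -- conclude Q = projOp G
  have hQG : Q = projOp G := by
    ext x
    have hm : Q x ∈ G := hEQ ▸ LinearMap.mem_range_self _ x
    have : G.starProjection x = Q x := by
      refine Submodule.eq_starProjection_of_mem_of_inner_eq_zero hm (fun w hw => ?_)
      obtain ⟨y, rfl⟩ : w ∈ LinearMap.range (Q : V →ₗ[ℝ] V) := hEQ ▸ hw
      have hQQx : Q (Q x) = Q x := by
        have := congrFun (congrArg DFunLike.coe hQidem) x
        simpa [ContinuousLinearMap.mul_apply] using this
      calc inner ℝ (x - Q x) (Q y)
          = inner ℝ (ContinuousLinearMap.adjoint Q (x - Q x)) y := by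
            rw [ContinuousLinearMap.adjoint_inner_left]
        _ = inner ℝ (Q (x - Q x)) y := by rw [hQsa.adjoint_eq]
        _ = (0 : ℝ) := by simp [map_sub, hQQx]
    exact this.symm
  rw [hQG] at hQtend
  exact hQtend
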